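/- Let Λ be a finite nonempty type, d ≥ 1, B : Λ → Λ → Matrix (Fin d) (Fin d) ℂ with ∑_{i∈Λ} (B_j^i)ᴴ * B_j^i = 1 for every j, M_j^i := B_j^i ⊗ₖ E_{ij}, and 𝓜_j(a) := ∑_{i∈Λ} (M_j^i)ᴴ * a * M_j^i. Let b ∈ Matrix (Fin d × Λ) (Fin d × Λ) ℂ be such that both b and 1 − b are positive semidefinite, let p ≥ 0 be a real number, and let c : Λ → ℝ with 0 ≤ c_j ≤ p for all j. Then for every n ∈ ℕ, the matrix (p^n) • 1 − ∑_{j∈Λ} (c_j)^n • 𝓜_j(b) is positive semidefinite. -/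

import Mathlib

open Matrix Kronecker
open scoped ComplexOrder

/-- The dilated operator `M_j^i = B_j^i ⊗ₖ E_{ij}`. -/
noncomputable def Mop {Λ : Type*} [Fintype Λ] [DecidableEq Λ] {d : ℕ}
    (B : Λ → Λ → Matrix (Fin d) (Fin d) ℂ) (j i : Λ) :
    Matrix (Fin d × Λ) (Fin d × Λ) ℂ :=
  B j i ⊗ₖ single i j (1 : ℂ)

/-!
With `P_j := 1 ⊗ₖ E_{jj}`, the normalisation of `B` gives `𝓜_j(1) = P_j`, and the `P_j` sum
to `1`. As `𝓜_j` is a Kraus map, `b ≤ 1` gives `𝓜_j(b) ≤ P_j`, hence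
`p^n P_j - c_j^n 𝓜_j(b) = (p^n - c_j^n) P_j + c_j^n (P_j - 𝓜_j(b)) ≥ 0`; sum over `j`.
-/

namespace Matrix

section Kronecker

variable {l m n p ι R : Type*} [Fintype ι] [NonUnitalNonAssocSemiring R]

theorem sum_kronecker (A : ι → Matrix l m R) (C : Matrix n p R) :
    (∑ i, A i) ⊗ₖ C = ∑ i, A i ⊗ₖ C := by
  ext
  simp [sum_apply, Finset.sum_mul]

theorem kronecker_sum (A : Matrix l m R) (C : ι → Matrix n p R) :
    A ⊗ₖ (∑ i, C i) = ∑ i, A ⊗ₖ C i := by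
  ext
  simp [sum_apply, Finset.mul_sum]

end Kronecker

theorem sum_one_kronecker_single_self {l ι R : Type*} [Fintype ι] [DecidableEq l]
    [DecidableEq ι] [CommSemiring R] : ∑ i : ι, (1 : Matrix l l R) ⊗ₖ single i i 1 = 1 := by
  rw [← kronecker_sum, sum_single_one, one_kronecker_one]

variable {R : Type*} [CommRing R] [PartialOrder R] [StarRing R] [StarOrderedRing R]

theorem PosSemidef.smul_sub_smul [IsOrderedRing R] {n : Type*} {P S : Matrix n n R}
    (hP : P.PosSemidef) (hPS : (P - S).PosSemidef) {c q : R} (hc : 0 ≤ c) (hcq : c ≤ q) :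
    (q • P - c • S).PosSemidef := by
  have h : q • P - c • S = (q - c) • P + c • (P - S) := by
    rw [smul_sub, sub_smul]; abel
  rw [h]
  exact (hP.smul (sub_nonneg.2 hcq)).add (hPS.smul hc)

theorem PosSemidef.sum_conjTranspose_mul_sub {m n ι : Type*} [Fintype m] [DecidableEq m]
    [Fintype n] [Fintype ι] {a : Matrix m m R} (ha : (1 - a).PosSemidef) (K : ι → Matrix m n R) :
    (∑ i, (K i)ᴴ * K i - ∑ i, (K i)ᴴ * a * K i).PosSemidef := by
  have h : ∑ i, (K i)ᴴ * K i - ∑ i, (K i)ᴴ * a * K i = ∑ i, (K i)ᴴ * (1 - a) * K i := by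
    simp only [Matrix.mul_sub, Matrix.sub_mul, Matrix.mul_one, Finset.sum_sub_distrib]
  rw [h]
  exact posSemidef_sum _ fun i _ => ha.conjTranspose_mul_mul_same (K i)

end Matrix

section Mop

variable {Λ : Type*} [Fintype Λ] [DecidableEq Λ] {d : ℕ} (B : Λ → Λ → Matrix (Fin d) (Fin d) ℂ)

theorem conjTranspose_Mop_mul_Mop (j i : Λ) :
    (Mop B j i)ᴴ * Mop B j i = ((B j i)ᴴ * B j i) ⊗ₖ single j j 1 := by
  rw [Mop, conjTranspose_kronecker, conjTranspose_single, ← mul_kronecker_mul,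
    single_mul_single_same, star_one, one_mul]

theorem sum_conjTranspose_Mop_mul_Mop {j : Λ} (hB : ∑ i, (B j i)ᴴ * B j i = 1) :
    ∑ i, (Mop B j i)ᴴ * Mop B j i = 1 ⊗ₖ single j j 1 := by
  simp_rw [conjTranspose_Mop_mul_Mop, ← sum_kronecker, hB]

end Mop

theorem stmt_12_general {Λ : Type*} [Fintype Λ] [DecidableEq Λ] {d : ℕ}
    (B : Λ → Λ → Matrix (Fin d) (Fin d) ℂ)
    (hB : ∀ j : Λ, ∑ i : Λ, (B j i)ᴴ * B j i = 1)
    (b : Matrix (Fin d × Λ) (Fin d × Λ) ℂ)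
    (hb1 : (1 - b).PosSemidef)
    (p : ℝ) (c : Λ → ℝ) (hc0 : ∀ j, 0 ≤ c j) (hcp : ∀ j, c j ≤ p) (n : ℕ) :
    (((p ^ n : ℝ) : ℂ) • (1 : Matrix (Fin d × Λ) (Fin d × Λ) ℂ) -
        ∑ j : Λ, ((c j ^ n : ℝ) : ℂ) • ∑ i : Λ, (Mop B j i)ᴴ * b * Mop B j i).PosSemidef := by
  rw [← sum_one_kronecker_single_self, Finset.smul_sum, ← Finset.sum_sub_distrib]
  refine posSemidef_sum _ fun j _ => ?_
  rw [← sum_conjTranspose_Mop_mul_Mop B (hB j)]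
  refine PosSemidef.smul_sub_smul
    (posSemidef_sum _ fun i _ => posSemidef_conjTranspose_mul_self _)
    (hb1.sum_conjTranspose_mul_sub _) ?_ ?_
  · exact_mod_cast pow_nonneg (hc0 j) n
  · exact_mod_cast pow_le_pow_left₀ (hc0 j) (hcp j) n

/-- the Loewner-order bound `∑ j, c_j^n • 𝓜_j(b) ≤ p^n • 1` for
`0 ≤ b ≤ 1`, `0 ≤ c_j ≤ p`, where `𝓜_j(a) = ∑ i, (M_j^i)ᴴ a M_j^i`. -/
theorem stmt_12 {Λ : Type*} [Fintype Λ] [DecidableEq Λ] [Nonempty Λ] {d : ℕ} (hd : 1 ≤ d)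
    (B : Λ → Λ → Matrix (Fin d) (Fin d) ℂ)
    (hB : ∀ j : Λ, ∑ i : Λ, (B j i)ᴴ * B j i = 1)
    (b : Matrix (Fin d × Λ) (Fin d × Λ) ℂ)
    (hb : b.PosSemidef) (hb1 : (1 - b).PosSemidef)
    (p : ℝ) (hp : 0 ≤ p) (c : Λ → ℝ) (hc0 : ∀ j, 0 ≤ c j) (hcp : ∀ j, c j ≤ p) (n : ℕ) :
    (((p ^ n : ℝ) : ℂ) • (1 : Matrix (Fin d × Λ) (Fin d × Λ) ℂ) -
        ∑ j : Λ, ((c j ^ n : ℝ) : ℂ) • ∑ i : Λ, (Mop B j i)ᴴ * b * Mop B j i).PosSemidef :=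
  stmt_12_general B hB b hb1 p c hc0 hcp n
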